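/- arXiv:2501.03564 — 5 statements merged into one kernel-verified Lean document; each statement's English description precedes it below -/
import Mathlib

section
/- Let 𝒢 be a strongly connected directed graph on N ≥ 2 nodes with Laplacian L = D − 𝒜. Then there exists a unique vector r = (r₁,…,r_N) ∈ ℝ^N with r_i > 0 for all i, rᵀL = 0 and rᵀ1_N = N; moreover, setting R = diag(r₁,…,r_N), the matrix L̂ := RL + LᵀR is symmetric positive semidefinite and satisfies L̂1_N = 0 and 1_NᵀL̂ = 0. -/
/-!
A vector `r` satisfies `rᵀL = 0` iff `dᵢ rᵢ = ∑ⱼ αⱼᵢ rⱼ` at every node. Since `L 1 = 0` this left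
kernel is nontrivial, and by the triangle inequality it contains `|v|` together with `v`. A
nonnegative kernel vector vanishing at a node vanishes along every arc leaving it, hence, by strong
connectivity, everywhere; so the kernel contains a positive `r`, and subtracting from any kernel
vector the largest multiple of `r` lying below it shows that the kernel is the line `ℝ r`.
Finally `L̂` is symmetric with nonpositive off-diagonal entries and zero row sums, so
`xᵀ L̂ x = -½ ∑ᵢⱼ L̂ᵢⱼ (xᵢ - xⱼ)² ≥ 0`.
-/

open Matrix
open scoped Kronecker

/-- Directed-graph Laplacian `L = D − 𝒜` with `D` the diagonal matrix of row sums of the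
adjacency matrix. -/
def lap {N : ℕ} (Adj : Matrix (Fin N) (Fin N) ℝ) : Matrix (Fin N) (Fin N) ℝ :=
  Matrix.diagonal (fun i => ∑ j, Adj i j) - Adj

/-- `Adj i j = 1` encodes an arc from node `j` to node `i`; strong connectivity asks for a
directed path between any two distinct nodes. -/
def StronglyConnected {N : ℕ} (Adj : Matrix (Fin N) (Fin N) ℝ) : Prop :=
  ∀ i j : Fin N, i ≠ j → Relation.TransGen (fun a b => Adj b a = 1) i j

/-- Characteristic polynomial `det (s E − A)` of the matrix pencil `(E, A)`. -/
noncomputable def pencilPoly {m : Type*} [Fintype m] [DecidableEq m]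
    (E A : Matrix m m ℝ) : Polynomial ℝ :=
  ((Polynomial.X : Polynomial ℝ) • E.map Polynomial.C - A.map Polynomial.C).det

/-- The pencil `(E, A)` is regular if `det (s E − A)` is not the zero polynomial. -/
def PencilRegular {m : Type*} [Fintype m] [DecidableEq m] (E A : Matrix m m ℝ) : Prop :=
  pencilPoly E A ≠ 0

/-- The pencil `(E, A)` is stable if every complex root of `det (s E − A)` has negative
real part. -/
def PencilStable {m : Type*} [Fintype m] [DecidableEq m] (E A : Matrix m m ℝ) : Prop :=
  ∀ z : ℂ, Polynomial.aeval z (pencilPoly E A) = 0 → z.re < 0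

/-- The pencil `(E, A)` is impulse-free if `deg det (s E − A) = rank E`. -/
def PencilImpulseFree {m : Type*} [Fintype m] [DecidableEq m] (E A : Matrix m m ℝ) : Prop :=
  (pencilPoly E A).natDegree = E.rank

/-- Admissible = regular, stable and impulse-free. -/
def PencilAdmissible {m : Type*} [Fintype m] [DecidableEq m] (E A : Matrix m m ℝ) : Prop :=
  PencilRegular E A ∧ PencilStable E A ∧ PencilImpulseFree E A

/-- A real square matrix is Hurwitz if all its complex eigenvalues have negative real part. -/
def IsHurwitz {m : Type*} [Fintype m] [DecidableEq m] (A : Matrix m m ℝ) : Prop :=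
  ∀ z : ℂ, Polynomial.aeval z A.charpoly = 0 → z.re < 0

/-- Block-diagonal assembly of `N` (possibly rectangular) blocks of a common shape. -/
def bdiagR {N : ℕ} {m m' : Type*} (M : Fin N → Matrix m m' ℝ) :
    Matrix (Fin N × m) (Fin N × m') ℝ :=
  fun x y => if x.1 = y.1 then M x.1 x.2 y.2 else 0

/-- Largest singular value of a real matrix (its ℓ²-operator norm). -/
noncomputable def specNorm {m : Type*} [Fintype m] [DecidableEq m] (M : Matrix m m ℝ) : ℝ :=
  ‖(Matrix.toEuclideanCLM (𝕜 := ℝ) M : EuclideanSpace ℝ m →L[ℝ] EuclideanSpace ℝ m)‖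

section Laplacian

variable {N : ℕ} {Adj : Matrix (Fin N) (Fin N) ℝ}

lemma lap_mulVec_one (Adj : Matrix (Fin N) (Fin N) ℝ) : lap Adj *ᵥ (fun _ => (1 : ℝ)) = 0 := by
  funext i
  rw [lap, sub_mulVec, Pi.sub_apply, mulVec_diagonal]
  simp [mulVec, dotProduct]

lemma vecMul_lap_apply (r : Fin N → ℝ) (i : Fin N) :
    (r ᵥ* lap Adj) i = (∑ j, Adj i j) * r i - ∑ j, Adj j i * r j := by
  rw [lap, vecMul_sub, Pi.sub_apply, vecMul_diagonal, mul_comm]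
  simp only [vecMul, dotProduct, mul_comm]

lemma vecMul_lap_eq_zero_iff {r : Fin N → ℝ} :
    r ᵥ* lap Adj = 0 ↔ ∀ i, (∑ j, Adj i j) * r i = ∑ j, Adj j i * r j := by
  simp only [funext_iff, vecMul_lap_apply, Pi.zero_apply, sub_eq_zero]

end Laplacian

section NonnegativeWeights

variable {N : ℕ} {Adj : Matrix (Fin N) (Fin N) ℝ}

lemma abs_vecMul_lap_eq_zero (hAdj : ∀ i j, 0 ≤ Adj i j) {v : Fin N → ℝ}
    (hv : v ᵥ* lap Adj = 0) : (fun i => |v i|) ᵥ* lap Adj = 0 := by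
  rw [vecMul_lap_eq_zero_iff] at hv ⊢
  have hle : ∀ i, (∑ j, Adj i j) * |v i| ≤ ∑ j, Adj j i * |v j| := fun i =>
    calc (∑ j, Adj i j) * |v i| = |∑ j, Adj j i * v j| := by
          rw [← hv i, abs_mul, abs_of_nonneg (Finset.sum_nonneg fun j _ => hAdj i j)]
      _ ≤ ∑ j, |Adj j i * v j| := Finset.abs_sum_le_sum_abs _ _
      _ = ∑ j, Adj j i * |v j| := by simp only [abs_mul, abs_of_nonneg (hAdj _ i)]
  -- both sides add up to `∑ i j, Adj i j * |v i|`, so each inequality is an equality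
  have hsum : ∑ i, (∑ j, Adj i j) * |v i| = ∑ i, ∑ j, Adj j i * |v j| := by
    rw [Finset.sum_comm]
    simp only [Finset.sum_mul]
  exact fun i => (Finset.sum_eq_sum_iff_of_le fun i _ => hle i).mp hsum i (Finset.mem_univ i)

lemma apply_eq_zero_of_adj_ne_zero (hAdj : ∀ i j, 0 ≤ Adj i j) {r : Fin N → ℝ}
    (hr₀ : ∀ i, 0 ≤ r i) (hr : r ᵥ* lap Adj = 0) {i j : Fin N} (hi : r i = 0)
    (hji : Adj j i ≠ 0) : r j = 0 := by
  have hbal := vecMul_lap_eq_zero_iff.mp hr i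
  rw [hi, mul_zero, eq_comm,
    Finset.sum_eq_zero_iff_of_nonneg fun k _ => mul_nonneg (hAdj k i) (hr₀ k)] at hbal
  exact (mul_eq_zero.mp (hbal j (Finset.mem_univ j))).resolve_left hji

lemma apply_eq_zero_of_transGen (hAdj : ∀ i j, 0 ≤ Adj i j) {r : Fin N → ℝ}
    (hr₀ : ∀ i, 0 ≤ r i) (hr : r ᵥ* lap Adj = 0) {i j : Fin N}
    (hpath : Relation.TransGen (fun a b => Adj b a = 1) i j) (hi : r i = 0) : r j = 0 := by
  induction hpath with
  | single hab => exact apply_eq_zero_of_adj_ne_zero hAdj hr₀ hr hi (by simp [hab])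
  | tail _ hbc ih => exact apply_eq_zero_of_adj_ne_zero hAdj hr₀ hr ih (by simp [hbc])

lemma eq_zero_of_vecMul_lap_eq_zero (hAdj : ∀ i j, 0 ≤ Adj i j) (hconn : StronglyConnected Adj)
    {r : Fin N → ℝ} (hr₀ : ∀ i, 0 ≤ r i) (hr : r ᵥ* lap Adj = 0) {i₀ : Fin N} (hi₀ : r i₀ = 0) :
    r = 0 := by
  funext j
  obtain rfl | hj := eq_or_ne i₀ j
  · exact hi₀
  · exact apply_eq_zero_of_transGen hAdj hr₀ hr (hconn i₀ j hj) hi₀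

lemma pos_of_vecMul_lap_eq_zero (hAdj : ∀ i j, 0 ≤ Adj i j) (hconn : StronglyConnected Adj)
    {r : Fin N → ℝ} (hr₀ : ∀ i, 0 ≤ r i) (hr : r ᵥ* lap Adj = 0) (hne : r ≠ 0) (i : Fin N) :
    0 < r i :=
  (hr₀ i).lt_of_ne' fun h => hne (eq_zero_of_vecMul_lap_eq_zero hAdj hconn hr₀ hr h)

lemma exists_pos_vecMul_lap_eq_zero [NeZero N] (hAdj : ∀ i j, 0 ≤ Adj i j)
    (hconn : StronglyConnected Adj) : ∃ r : Fin N → ℝ, (∀ i, 0 < r i) ∧ r ᵥ* lap Adj = 0 := by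
  have hdet : (lap Adj).det = 0 :=
    exists_mulVec_eq_zero_iff.mp ⟨_, fun h => one_ne_zero (congrFun h 0), lap_mulVec_one Adj⟩
  obtain ⟨v, hv, hvL⟩ := exists_vecMul_eq_zero_iff.mpr hdet
  have habsL := abs_vecMul_lap_eq_zero hAdj hvL
  have habs_ne : (fun i => |v i|) ≠ 0 := fun h => hv (funext fun i => abs_eq_zero.mp (congrFun h i))
  exact ⟨_, pos_of_vecMul_lap_eq_zero hAdj hconn (fun i => abs_nonneg (v i)) habsL habs_ne, habsL⟩

lemma exists_eq_smul_of_vecMul_lap_eq_zero [NeZero N] (hAdj : ∀ i j, 0 ≤ Adj i j)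
    (hconn : StronglyConnected Adj) {r r' : Fin N → ℝ} (hr : ∀ i, 0 < r i)
    (hrL : r ᵥ* lap Adj = 0) (hr'L : r' ᵥ* lap Adj = 0) : ∃ t : ℝ, r' = t • r := by
  -- `r' - t • r` with `t = min r' / r` is a nonnegative kernel vector with a zero entry
  obtain ⟨i₀, hi₀⟩ := Finite.exists_min fun i => r' i / r i
  set t := r' i₀ / r i₀
  have hw₀ : ∀ i, 0 ≤ (r' - t • r) i := fun i => by
    simpa [sub_nonneg] using (le_div_iff₀ (hr i)).mp (hi₀ i)
  have hwL : (r' - t • r) ᵥ* lap Adj = 0 := by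
    rw [sub_vecMul, smul_vecMul, hrL, hr'L, smul_zero, sub_zero]
  have hwi₀ : (r' - t • r) i₀ = 0 := by simp [t, div_mul_cancel₀ _ (hr i₀).ne']
  exact ⟨t, sub_eq_zero.mp (eq_zero_of_vecMul_lap_eq_zero hAdj hconn hw₀ hwL hwi₀)⟩

theorem existsUnique_pos_vecMul_lap_eq_zero [NeZero N] (hAdj : ∀ i j, 0 ≤ Adj i j)
    (hconn : StronglyConnected Adj) :
    ∃! r : Fin N → ℝ, (∀ i, 0 < r i) ∧ r ᵥ* lap Adj = 0 ∧ ∑ i, r i = N := by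
  obtain ⟨r, hr, hrL⟩ := exists_pos_vecMul_lap_eq_zero hAdj hconn
  have hS : 0 < ∑ i, r i := Finset.sum_pos (fun i _ => hr i) Finset.univ_nonempty
  set c := (N : ℝ) / ∑ i, r i
  have hc : 0 < c := div_pos (by exact_mod_cast NeZero.pos N) hS
  refine ⟨c • r, ⟨fun i => mul_pos hc (hr i), by rw [smul_vecMul, hrL, smul_zero], ?_⟩, ?_⟩
  · simp [c, ← Finset.mul_sum, div_mul_cancel₀ _ hS.ne']
  · rintro r' ⟨-, hr'L, hr'S⟩
    obtain ⟨t, rfl⟩ := exists_eq_smul_of_vecMul_lap_eq_zero hAdj hconn hr hrL hr'L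
    have htS : t * ∑ i, r i = N := by simpa [← Finset.mul_sum] using hr'S
    rw [show t = c from (eq_div_iff hS.ne').mpr htS]

end NonnegativeWeights

section QuadraticForm

variable {ι : Type*} [Fintype ι]

lemma sum_mul_sub_sq_eq_neg_two_mul_dotProduct (Q : Matrix ι ι ℝ) (hrow : ∀ i, ∑ j, Q i j = 0)
    (hcol : ∀ j, ∑ i, Q i j = 0) (x : ι → ℝ) :
    ∑ i, ∑ j, Q i j * (x i - x j) ^ 2 = -2 * (x ⬝ᵥ Q *ᵥ x) := by
  have hxi : ∑ i, ∑ j, Q i j * x i ^ 2 = 0 := by simp [← Finset.sum_mul, hrow]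
  have hxj : ∑ i, ∑ j, Q i j * x j ^ 2 = 0 := by
    rw [Finset.sum_comm]
    simp [← Finset.sum_mul, hcol]
  have hform : x ⬝ᵥ Q *ᵥ x = ∑ i, ∑ j, Q i j * (x i * x j) := by
    simp only [dotProduct, mulVec, Finset.mul_sum]
    exact Finset.sum_congr rfl fun i _ => Finset.sum_congr rfl fun j _ => by ring
  calc ∑ i, ∑ j, Q i j * (x i - x j) ^ 2
      = ∑ i, ∑ j, (Q i j * x i ^ 2 + Q i j * x j ^ 2 - 2 * (Q i j * (x i * x j))) :=
        Finset.sum_congr rfl fun i _ => Finset.sum_congr rfl fun j _ => by ring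
    _ = -2 * (x ⬝ᵥ Q *ᵥ x) := by
        simp only [Finset.sum_sub_distrib, Finset.sum_add_distrib, ← Finset.mul_sum, hxi, hxj,
          hform]
        ring

lemma posSemidef_of_offDiag_nonpos_of_sum_eq_zero {Q : Matrix ι ι ℝ} (hQ : Q.IsSymm)
    (hoff : ∀ i j, i ≠ j → Q i j ≤ 0) (hrow : ∀ i, ∑ j, Q i j = 0) : Q.PosSemidef := by
  have hcol : ∀ j, ∑ i, Q i j = 0 := fun j => by simpa only [hQ.apply] using hrow j
  refine posSemidef_iff_dotProduct_mulVec.mpr ⟨isHermitian_iff_isSymm.mpr hQ, fun x => ?_⟩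
  have hterm : ∀ i j, Q i j * (x i - x j) ^ 2 ≤ 0 := fun i j => by
    obtain rfl | hij := eq_or_ne i j
    · simp
    · exact mul_nonpos_of_nonpos_of_nonneg (hoff i j hij) (sq_nonneg _)
  have hsum : ∑ i, ∑ j, Q i j * (x i - x j) ^ 2 ≤ 0 :=
    Finset.sum_nonpos fun i _ => Finset.sum_nonpos fun j _ => hterm i j
  rw [star_trivial]
  linarith [sum_mul_sub_sq_eq_neg_two_mul_dotProduct Q hrow hcol x]

end QuadraticForm

section SymmetrizedLaplacian

variable {N : ℕ} {Adj : Matrix (Fin N) (Fin N) ℝ}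

def symLap (r : Fin N → ℝ) (Adj : Matrix (Fin N) (Fin N) ℝ) : Matrix (Fin N) (Fin N) ℝ :=
  diagonal r * lap Adj + (lap Adj)ᵀ * diagonal r

lemma symLap_isSymm (r : Fin N → ℝ) (Adj : Matrix (Fin N) (Fin N) ℝ) : (symLap r Adj).IsSymm := by
  simp [symLap, IsSymm, transpose_add, transpose_mul, add_comm]

lemma symLap_apply_of_ne (r : Fin N → ℝ) {i j : Fin N} (hij : i ≠ j) :
    symLap r Adj i j = -(r i * Adj i j + Adj j i * r j) := by
  rw [symLap, Matrix.add_apply, diagonal_mul, mul_diagonal, transpose_apply, lap, Matrix.sub_apply,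
    Matrix.sub_apply, diagonal_apply_ne _ hij, diagonal_apply_ne _ hij.symm]
  ring

lemma symLap_mulVec_one {r : Fin N → ℝ} (hr : r ᵥ* lap Adj = 0) :
    symLap r Adj *ᵥ (fun _ => (1 : ℝ)) = 0 := by
  have hR : diagonal r *ᵥ (fun _ => (1 : ℝ)) = r := funext fun i => by simp [mulVec_diagonal]
  rw [symLap, add_mulVec, ← mulVec_mulVec, ← mulVec_mulVec, lap_mulVec_one, mulVec_zero, hR,
    mulVec_transpose, hr, zero_add]

lemma one_vecMul_symLap {r : Fin N → ℝ} (hr : r ᵥ* lap Adj = 0) :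
    (fun _ => (1 : ℝ)) ᵥ* symLap r Adj = 0 := by
  rw [← mulVec_transpose, symLap_isSymm, symLap_mulVec_one hr]

lemma symLap_posSemidef (hAdj : ∀ i j, 0 ≤ Adj i j) {r : Fin N → ℝ} (hr₀ : ∀ i, 0 ≤ r i)
    (hr : r ᵥ* lap Adj = 0) : (symLap r Adj).PosSemidef := by
  refine posSemidef_of_offDiag_nonpos_of_sum_eq_zero (symLap_isSymm r Adj) (fun i j hij => ?_)
    fun i => by simpa [mulVec, dotProduct] using congrFun (symLap_mulVec_one hr) i
  rw [symLap_apply_of_ne r hij, neg_nonpos]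
  exact add_nonneg (mul_nonneg (hr₀ i) (hAdj i j)) (mul_nonneg (hAdj j i) (hr₀ j))

end SymmetrizedLaplacian

/-- For a strongly connected digraph on `N ≥ 2` nodes with Laplacian
`L = D − 𝒜`, there is a unique vector `r` with positive entries, `rᵀL = 0` and `rᵀ1 = N`;
moreover `L̂ = RL + LᵀR` (with `R = diag r`) is symmetric positive semidefinite and
annihilates the all-ones vector on both sides. -/
theorem stmt_0 {N : ℕ} (hN : 2 ≤ N) (Adj : Matrix (Fin N) (Fin N) ℝ)
    (hAdj : ∀ i j, Adj i j = 0 ∨ Adj i j = 1)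
    (hconn : StronglyConnected Adj) :
    (∃! r : Fin N → ℝ,
        (∀ i, 0 < r i) ∧ r ᵥ* lap Adj = 0 ∧ (∑ i, r i) = (N : ℝ)) ∧
    (∀ r : Fin N → ℝ, (∀ i, 0 < r i) → r ᵥ* lap Adj = 0 → (∑ i, r i) = (N : ℝ) →
      (Matrix.diagonal r * lap Adj + (lap Adj)ᵀ * Matrix.diagonal r).PosSemidef ∧
      (Matrix.diagonal r * lap Adj + (lap Adj)ᵀ * Matrix.diagonal r) *ᵥ (fun _ => (1 : ℝ)) = 0 ∧
      (fun _ => (1 : ℝ)) ᵥ* (Matrix.diagonal r * lap Adj + (lap Adj)ᵀ * Matrix.diagonal r) = 0) := by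
  have : NeZero N := ⟨by omega⟩
  have hAdj₀ : ∀ i j, 0 ≤ Adj i j := fun i j => by rcases hAdj i j with h | h <;> simp [h]
  exact ⟨existsUnique_pos_vecMul_lap_eq_zero hAdj₀ hconn, fun r hr hrL _ =>
    ⟨symLap_posSemidef hAdj₀ (fun i => (hr i).le) hrL, symLap_mulVec_one hrL,
      one_vecMul_symLap hrL⟩⟩
end

section
/- Let 𝒢 be a strongly connected directed graph on N nodes with Laplacian L, let r = (r₁,…,r_N) be the positive vector with rᵀL = 0 and rᵀ1_N = N, put R = diag(r) and L̂ = RL + LᵀR. Let n = n₁ + n₂ and for each i = 1,…,N let T_{i1} ∈ ℝ^{n₁×n₁} and T_{i2} ∈ ℝ^{n₂×n₂} be orthogonal matrices, let 0 ≤ v_{i1} ≤ n₁, 0 ≤ v_{i2} ≤ n₂ and g_i > 0, and set T_i = diag(T_{i1}, T_{i2}), G_i = diag(g_i I_{v_{i1}}, 0_{(n₁−v_{i1})×(n₁−v_{i1})}, g_i I_{v_{i2}}, 0_{(n₂−v_{i2})×(n₂−v_{i2})}), T = blockdiag(T₁,…,T_N), G = blockdiag(G₁,…,G_N). Assume joint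 observability: the only pair (w₁, w₂) ∈ ℝ^{n₁} × ℝ^{n₂} such that for every i the first v_{i1} entries of T_{i1}ᵀw₁ and the first v_{i2} entries of T_{i2}ᵀw₂ all vanish is w₁ = 0, w₂ = 0. Then there exists μ > 0 such that Tᵀ(L̂ ⊗ I_n)T + G ⪰ μ I_{nN}; equivalently, the symmetric matrix Tᵀ(L̂ ⊗ I_n)T + G is positive definite. -/
open Matrix
open scoped Kronecker

/-!
Put `y = T x`. The quadratic form of `Tᵀ(L̂ ⊗ Iₙ)T + G` at `x` is `yᵀ(L̂ ⊗ Iₙ)y + xᵀGx`. The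
matrix `L̂` is symmetric, has zero row sums (because `rᵀL = 0`) and nonpositive off-diagonal
entries, so `yᵀ(L̂ ⊗ Iₙ)y = ½ ∑ᵢⱼ (-L̂ᵢⱼ) ‖yᵢ - yⱼ‖² ≥ 0`, and this vanishes only if `yᵢ = yⱼ`
along every arc (where `L̂ᵢⱼ < 0`), hence, by strong connectivity, only if `y = 1_N ⊗ w`.
Then `xᵢ = Tᵢᵀ w`, and `xᵀGx = 0` kills exactly the observed entries of `Tᵢᵀ w`, so joint
observability forces `w = 0`, i.e. `x = 0`. A positive definite matrix dominates `μ I` for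
`μ` its least eigenvalue.
-/

open scoped MatrixOrder in
theorem Matrix.PosDef.exists_pos_posSemidef_sub_smul_one {m : Type*} [Fintype m] [DecidableEq m]
    {M : Matrix m m ℝ} (hM : M.PosDef) : ∃ μ : ℝ, 0 < μ ∧ (M - μ • 1).PosSemidef := by
  rcases subsingleton_or_nontrivial (Matrix m m ℝ) with _ | _
  · exact ⟨1, one_pos, by rw [Subsingleton.elim (M - 1 • 1) 0]; exact .zero⟩
  obtain ⟨μ, hμ, hle⟩ := (CFC.exists_pos_algebraMap_le_iff hM.isHermitian.isSelfAdjoint).2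
    fun _ hx => hM.isStrictlyPositive.spectrum_pos hx
  exact ⟨μ, hμ, by simpa [Algebra.algebraMap_eq_smul_one, Matrix.le_iff] using hle⟩

theorem Relation.ReflTransGen.apply_eq {α β : Type*} {r : α → α → Prop} {a b : α}
    (h : Relation.ReflTransGen r a b) {f : α → β} (hf : ∀ a b, r a b → f a = f b) : f a = f b :=
  Relation.reflTransGen_le_of_equivalence_of_le (Setoid.ker f).iseqv hf _ _ h

theorem apply_mul_sq_sub_nonpos {ι : Type*} {S : Matrix ι ι ℝ} (hoff : ∀ i j, i ≠ j → S i j ≤ 0)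
    (f : ι → ℝ) (i j : ι) : S i j * (f i - f j) ^ 2 ≤ 0 := by
  rcases eq_or_ne i j with rfl | hij
  · simp
  · exact mul_nonpos_of_nonpos_of_nonneg (hoff i j hij) (sq_nonneg _)

section LaplacianForm

variable {ι κ : Type*} [Fintype ι] [Fintype κ] [DecidableEq κ]

theorem dotProduct_kronecker_one_mulVec (S : Matrix ι ι ℝ) (y : ι × κ → ℝ) :
    y ⬝ᵥ ((S ⊗ₖ (1 : Matrix κ κ ℝ)) *ᵥ y) =
      ∑ k, (fun i => y (i, k)) ⬝ᵥ (S *ᵥ fun i => y (i, k)) := by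
  simp only [dotProduct, mulVec, kroneckerMap_apply, Fintype.sum_prod_type, one_apply, mul_ite,
    mul_one, mul_zero, ite_mul, zero_mul, Finset.sum_ite_eq, Finset.mem_univ, if_true,
    Finset.mul_sum]
  exact Finset.sum_comm

theorem dotProduct_mulVec_eq_neg_half_sum_sq {S : Matrix ι ι ℝ} (hS : S.IsSymm)
    (hrow : ∀ i, ∑ j, S i j = 0) (f : ι → ℝ) :
    f ⬝ᵥ (S *ᵥ f) = -(1 / 2) * ∑ i, ∑ j, S i j * (f i - f j) ^ 2 := by
  have hrow_sq : ∑ i, ∑ j, S i j * f i ^ 2 = 0 :=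
    Finset.sum_eq_zero fun i _ => by rw [← Finset.sum_mul, hrow i, zero_mul]
  have hcol_sq : ∑ i, ∑ j, S i j * f j ^ 2 = 0 := by
    rw [Finset.sum_comm]
    refine Finset.sum_eq_zero fun j _ => ?_
    rw [← Finset.sum_mul, Finset.sum_congr rfl fun i _ => hS.apply j i, hrow j, zero_mul]
  have hexpand : ∑ i, ∑ j, S i j * (f i - f j) ^ 2 = ∑ i, ∑ j, S i j * f i ^ 2
      - 2 * ∑ i, ∑ j, S i j * (f i * f j) + ∑ i, ∑ j, S i j * f j ^ 2 := by
    simp only [Finset.mul_sum, ← Finset.sum_sub_distrib, ← Finset.sum_add_distrib]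
    exact Finset.sum_congr rfl fun i _ => Finset.sum_congr rfl fun j _ => by ring
  have hform : f ⬝ᵥ (S *ᵥ f) = ∑ i, ∑ j, S i j * (f i * f j) := by
    simp only [dotProduct, mulVec, Finset.mul_sum]
    exact Finset.sum_congr rfl fun i _ => Finset.sum_congr rfl fun j _ => by ring
  rw [hform, hexpand, hrow_sq, hcol_sq]
  ring

variable {S : Matrix ι ι ℝ}

theorem dotProduct_mulVec_nonneg_of_offDiag_nonpos (hS : S.IsSymm) (hrow : ∀ i, ∑ j, S i j = 0)
    (hoff : ∀ i j, i ≠ j → S i j ≤ 0) (f : ι → ℝ) : 0 ≤ f ⬝ᵥ (S *ᵥ f) := by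
  have hsum : ∑ i, ∑ j, S i j * (f i - f j) ^ 2 ≤ 0 :=
    Finset.sum_nonpos fun i _ => Finset.sum_nonpos fun j _ => apply_mul_sq_sub_nonpos hoff f i j
  rw [dotProduct_mulVec_eq_neg_half_sum_sq hS hrow]
  linarith

theorem apply_eq_of_dotProduct_mulVec_eq_zero (hS : S.IsSymm) (hrow : ∀ i, ∑ j, S i j = 0)
    (hoff : ∀ i j, i ≠ j → S i j ≤ 0) {f : ι → ℝ} (hf : f ⬝ᵥ (S *ᵥ f) = 0) {i j : ι}
    (hij : S i j < 0) : f i = f j := by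
  rw [dotProduct_mulVec_eq_neg_half_sum_sq hS hrow] at hf
  have hsum : ∑ i, ∑ j, S i j * (f i - f j) ^ 2 = 0 := by linarith
  have hrow_i := (Finset.sum_eq_zero_iff_of_nonpos fun i _ => Finset.sum_nonpos fun j _ =>
    apply_mul_sq_sub_nonpos hoff f i j).1 hsum i (Finset.mem_univ _)
  have hterm := (Finset.sum_eq_zero_iff_of_nonpos fun j _ =>
    apply_mul_sq_sub_nonpos hoff f i j).1 hrow_i j (Finset.mem_univ _)
  rwa [mul_eq_zero, or_iff_right hij.ne, sq_eq_zero_iff, sub_eq_zero] at hterm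

theorem dotProduct_kronecker_one_mulVec_nonneg (hS : S.IsSymm) (hrow : ∀ i, ∑ j, S i j = 0)
    (hoff : ∀ i j, i ≠ j → S i j ≤ 0) (y : ι × κ → ℝ) :
    0 ≤ y ⬝ᵥ ((S ⊗ₖ (1 : Matrix κ κ ℝ)) *ᵥ y) := by
  rw [dotProduct_kronecker_one_mulVec]
  exact Finset.sum_nonneg fun k _ => dotProduct_mulVec_nonneg_of_offDiag_nonpos hS hrow hoff _

theorem apply_eq_of_dotProduct_kronecker_one_mulVec_eq_zero (hS : S.IsSymm)
    (hrow : ∀ i, ∑ j, S i j = 0) (hoff : ∀ i j, i ≠ j → S i j ≤ 0)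
    (hconn : ∀ i j, Relation.ReflTransGen (fun a b => S a b < 0) i j) {y : ι × κ → ℝ}
    (hy : y ⬝ᵥ ((S ⊗ₖ (1 : Matrix κ κ ℝ)) *ᵥ y) = 0) (i j : ι) (k : κ) : y (i, k) = y (j, k) := by
  rw [dotProduct_kronecker_one_mulVec] at hy
  have hk := (Finset.sum_eq_zero_iff_of_nonneg fun k _ =>
    dotProduct_mulVec_nonneg_of_offDiag_nonpos hS hrow hoff _).1 hy k (Finset.mem_univ _)
  exact (hconn i j).apply_eq (f := fun i => y (i, k)) fun a b hab =>
    apply_eq_of_dotProduct_mulVec_eq_zero hS hrow hoff hk hab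

theorem posDef_transpose_mul_kronecker_one_mul_add_diagonal [DecidableEq ι] (hS : S.IsSymm)
    (hrow : ∀ i, ∑ j, S i j = 0) (hoff : ∀ i j, i ≠ j → S i j ≤ 0)
    (hconn : ∀ i j, Relation.ReflTransGen (fun a b => S a b < 0) i j)
    {T : Matrix (ι × κ) (ι × κ) ℝ} (hT : Tᵀ * T = 1) {d : ι × κ → ℝ} (hd : ∀ p, 0 ≤ d p)
    (hobs : ∀ w : κ → ℝ, (∀ p, d p ≠ 0 → (Tᵀ *ᵥ fun q => w q.2) p = 0) → w = 0) :
    (Tᵀ * (S ⊗ₖ (1 : Matrix κ κ ℝ)) * T + diagonal d).PosDef := by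
  have hK : (S ⊗ₖ (1 : Matrix κ κ ℝ))ᵀ = S ⊗ₖ 1 := by
    rw [← kroneckerMap_transpose, hS.eq, transpose_one]
  have hHerm : (Tᵀ * (S ⊗ₖ (1 : Matrix κ κ ℝ)) * T + diagonal d).IsHermitian := by
    simp [IsHermitian, transpose_add, transpose_mul, hK, Matrix.mul_assoc]
  refine .of_dotProduct_mulVec_pos hHerm fun x hx => ?_
  have hsplit : x ⬝ᵥ ((Tᵀ * (S ⊗ₖ (1 : Matrix κ κ ℝ)) * T + diagonal d) *ᵥ x) =
      (T *ᵥ x) ⬝ᵥ ((S ⊗ₖ (1 : Matrix κ κ ℝ)) *ᵥ (T *ᵥ x)) + ∑ p, d p * x p ^ 2 := by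
    rw [add_mulVec, dotProduct_add, ← mulVec_mulVec, ← mulVec_mulVec, dotProduct_mulVec,
      vecMul_transpose]
    simp only [dotProduct, mulVec_diagonal, sq]
    congr 1
    exact Finset.sum_congr rfl fun p _ => by ring
  have hKy := dotProduct_kronecker_one_mulVec_nonneg hS hrow hoff (T *ᵥ x)
  have hDx : 0 ≤ ∑ p, d p * x p ^ 2 := Finset.sum_nonneg fun p _ => mul_nonneg (hd p) (sq_nonneg _)
  rw [star_trivial, hsplit]
  refine (add_nonneg hKy hDx).lt_of_ne fun h0 => hx ?_
  obtain ⟨p, -⟩ := Function.ne_iff.1 hx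
  set w : κ → ℝ := fun k => (T *ᵥ x) (p.1, k)
  have hy : T *ᵥ x = fun q => w q.2 := funext fun q =>
    apply_eq_of_dotProduct_kronecker_one_mulVec_eq_zero hS hrow hoff hconn (by linarith) _ _ _
  have hx_eq : x = Tᵀ *ᵥ fun q => w q.2 := by rw [← hy, mulVec_mulVec, hT, one_mulVec]
  have hw : w = 0 := hobs w fun q hq => by
    have hq0 := (Finset.sum_eq_zero_iff_of_nonneg fun p _ => mul_nonneg (hd p) (sq_nonneg (x p))).1
      (by linarith) q (Finset.mem_univ _)
    rwa [mul_eq_zero, or_iff_right hq, sq_eq_zero_iff, hx_eq] at hq0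
  rw [hx_eq, hw]
  exact mulVec_zero _

end LaplacianForm

section BlockDiagonal

variable {N : ℕ} {m m' m'' : Type*}

theorem bdiagR_mulVec [Fintype m'] (M : Fin N → Matrix m m' ℝ) (x : Fin N × m' → ℝ) (i : Fin N)
    (k : m) : (bdiagR M *ᵥ x) (i, k) = (M i *ᵥ fun l => x (i, l)) k := by
  simp [mulVec, dotProduct, bdiagR, Fintype.sum_prod_type, ite_mul]

theorem transpose_bdiagR (M : Fin N → Matrix m m' ℝ) :
    (bdiagR M)ᵀ = bdiagR fun i => (M i)ᵀ := by
  ext ⟨i, k⟩ ⟨j, l⟩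
  rcases eq_or_ne i j with rfl | h
  · simp [bdiagR]
  · simp [bdiagR, h, h.symm]

theorem bdiagR_mul_bdiagR [Fintype m'] (M : Fin N → Matrix m m' ℝ) (M' : Fin N → Matrix m' m'' ℝ) :
    bdiagR M * bdiagR M' = bdiagR fun i => M i * M' i := by
  ext ⟨i, k⟩ ⟨j, l⟩
  simp only [mul_apply, bdiagR, Fintype.sum_prod_type, ite_mul, zero_mul, mul_ite, mul_zero]
  split_ifs with h <;> simp [h]

theorem bdiagR_diagonal [DecidableEq m] (d : Fin N → m → ℝ) :
    bdiagR (fun i => diagonal (d i)) = diagonal fun p => d p.1 p.2 := by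
  ext ⟨i, k⟩ ⟨j, l⟩
  simp only [bdiagR, diagonal_apply, Prod.mk.injEq]
  split_ifs <;> simp_all

theorem transpose_bdiagR_mul_self [Fintype m] [DecidableEq m] {M : Fin N → Matrix m m ℝ}
    (hM : ∀ i, (M i)ᵀ * M i = 1) : (bdiagR M)ᵀ * bdiagR M = 1 := by
  rw [transpose_bdiagR, bdiagR_mul_bdiagR]
  simp_rw [hM, ← diagonal_one, bdiagR_diagonal]

end BlockDiagonal

section SymmetrizedLaplacian

variable {N : ℕ} {Adj : Matrix (Fin N) (Fin N) ℝ} {r : Fin N → ℝ}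

def symmLap (Adj : Matrix (Fin N) (Fin N) ℝ) (r : Fin N → ℝ) : Matrix (Fin N) (Fin N) ℝ :=
  diagonal r * lap Adj + (lap Adj)ᵀ * diagonal r

theorem lap_apply_of_ne {i j : Fin N} (h : i ≠ j) : lap Adj i j = -Adj i j := by
  simp [lap, h]

theorem sum_lap_apply (i : Fin N) : ∑ j, lap Adj i j = 0 := by
  simp [lap, Finset.sum_sub_distrib, diagonal_apply]

theorem symmLap_apply (i j : Fin N) :
    symmLap Adj r i j = r i * lap Adj i j + r j * lap Adj j i := by
  simp [symmLap, diagonal_mul, mul_diagonal, mul_comm]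

theorem isSymm_symmLap : (symmLap Adj r).IsSymm :=
  IsSymm.ext fun i j => by rw [symmLap_apply, symmLap_apply, add_comm]

theorem sum_symmLap_apply (hrL : r ᵥ* lap Adj = 0) (i : Fin N) : ∑ j, symmLap Adj r i j = 0 := by
  have hcol : ∑ j, r j * lap Adj j i = 0 := congrFun hrL i
  simp only [symmLap_apply, Finset.sum_add_distrib, ← Finset.mul_sum, sum_lap_apply, hcol,
    mul_zero, add_zero]

theorem symmLap_apply_nonpos (hAdj : ∀ i j, 0 ≤ Adj i j) (hr : ∀ i, 0 ≤ r i) {i j : Fin N}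
    (h : i ≠ j) : symmLap Adj r i j ≤ 0 := by
  rw [symmLap_apply, lap_apply_of_ne h, lap_apply_of_ne h.symm]
  nlinarith [mul_nonneg (hr i) (hAdj i j), mul_nonneg (hr j) (hAdj j i)]

theorem symmLap_apply_neg (hAdj : ∀ i j, 0 ≤ Adj i j) (hr : ∀ i, 0 < r i) {i j : Fin N}
    (h : i ≠ j) (hji : 0 < Adj j i) : symmLap Adj r i j < 0 := by
  rw [symmLap_apply, lap_apply_of_ne h, lap_apply_of_ne h.symm]
  nlinarith [mul_nonneg (hr i).le (hAdj i j), mul_pos (hr j) hji]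

theorem StronglyConnected.reflTransGen_symmLap_neg (hconn : StronglyConnected Adj)
    (hAdj : ∀ i j, 0 ≤ Adj i j) (hr : ∀ i, 0 < r i) (i j : Fin N) :
    Relation.ReflTransGen (fun a b => symmLap Adj r a b < 0) i j := by
  rcases eq_or_ne i j with rfl | hij
  · exact .refl
  refine Relation.ReflTransGen.lift' id (fun a b hab => ?_) _ _ (hconn i j hij).to_reflTransGen
  rcases eq_or_ne a b with rfl | hne
  · exact .refl
  · exact .single (symmLap_apply_neg hAdj hr hne (by simp [hab]))

end SymmetrizedLaplacian

theorem stmt_2_general {N n₁ n₂ : ℕ} (Adj : Matrix (Fin N) (Fin N) ℝ)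
    (hAdj : ∀ i j, Adj i j = 0 ∨ Adj i j = 1)
    (hconn : StronglyConnected Adj)
    (r : Fin N → ℝ) (hr : ∀ i, 0 < r i) (hrL : r ᵥ* lap Adj = 0)
    (Lh : Matrix (Fin N) (Fin N) ℝ)
    (hLh : Lh = Matrix.diagonal r * lap Adj + (lap Adj)ᵀ * Matrix.diagonal r)
    (T1 : Fin N → Matrix (Fin n₁) (Fin n₁) ℝ) (hT1 : ∀ i, (T1 i)ᵀ * T1 i = 1)
    (T2 : Fin N → Matrix (Fin n₂) (Fin n₂) ℝ) (hT2 : ∀ i, (T2 i)ᵀ * T2 i = 1)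
    (v1 v2 : Fin N → ℕ)
    (g : Fin N → ℝ) (hg : ∀ i, 0 < g i)
    (hobs : ∀ (w1 : Fin n₁ → ℝ) (w2 : Fin n₂ → ℝ),
      (∀ i, (∀ a : Fin n₁, (a : ℕ) < v1 i → ((T1 i)ᵀ *ᵥ w1) a = 0) ∧
            (∀ b : Fin n₂, (b : ℕ) < v2 i → ((T2 i)ᵀ *ᵥ w2) b = 0)) →
      w1 = 0 ∧ w2 = 0)
    (T G : Matrix (Fin N × (Fin n₁ ⊕ Fin n₂)) (Fin N × (Fin n₁ ⊕ Fin n₂)) ℝ)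
    (hT : T = bdiagR (fun i => Matrix.fromBlocks (T1 i) 0 0 (T2 i)))
    (hG : G = bdiagR (fun i => Matrix.fromBlocks
        (Matrix.diagonal fun a : Fin n₁ => if (a : ℕ) < v1 i then g i else 0) 0 0
        (Matrix.diagonal fun b : Fin n₂ => if (b : ℕ) < v2 i then g i else 0))) :
    (∃ μ : ℝ, 0 < μ ∧
      (Tᵀ * (Lh ⊗ₖ (1 : Matrix (Fin n₁ ⊕ Fin n₂) (Fin n₁ ⊕ Fin n₂) ℝ)) * T + G
        - μ • 1).PosSemidef) ∧
    (Tᵀ * (Lh ⊗ₖ (1 : Matrix (Fin n₁ ⊕ Fin n₂) (Fin n₁ ⊕ Fin n₂) ℝ)) * T + G).PosDef := by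
  have hAdj_nonneg : ∀ i j, 0 ≤ Adj i j := fun i j => by rcases hAdj i j with h | h <;> simp [h]
  have hT_orth : Tᵀ * T = 1 := by
    rw [hT]
    exact transpose_bdiagR_mul_self fun i => by
      simp [fromBlocks_transpose, fromBlocks_multiply, hT1 i, hT2 i]
  suffices hPD : (Tᵀ * (Lh ⊗ₖ (1 : Matrix (Fin n₁ ⊕ Fin n₂) (Fin n₁ ⊕ Fin n₂) ℝ)) * T + G).PosDef from
    ⟨hPD.exists_pos_posSemidef_sub_smul_one, hPD⟩
  rw [hLh, hG]
  simp only [fromBlocks_diagonal, bdiagR_diagonal]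
  refine posDef_transpose_mul_kronecker_one_mul_add_diagonal isSymm_symmLap (sum_symmLap_apply hrL)
    (fun i j => symmLap_apply_nonpos hAdj_nonneg fun i => (hr i).le)
    (hconn.reflTransGen_symmLap_neg hAdj_nonneg hr) hT_orth ?_ fun w hw => ?_
  · rintro ⟨i, a | b⟩ <;> exact ite_nonneg (hg i).le le_rfl
  have hcoord (i : Fin N) (k : Fin n₁ ⊕ Fin n₂) : (Tᵀ *ᵥ fun q => w q.2) (i, k) =
      Sum.elim ((T1 i)ᵀ *ᵥ (w ∘ Sum.inl)) ((T2 i)ᵀ *ᵥ (w ∘ Sum.inr)) k := by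
    rw [hT, transpose_bdiagR, bdiagR_mulVec, fromBlocks_transpose, fromBlocks_mulVec]
    simp
  obtain ⟨h1, h2⟩ := hobs (w ∘ Sum.inl) (w ∘ Sum.inr) fun i =>
    ⟨fun a ha => by simpa [hcoord] using hw (i, .inl a) (by simp [ha, (hg i).ne']),
     fun b hb => by simpa [hcoord] using hw (i, .inr b) (by simp [hb, (hg i).ne'])⟩
  rw [← Sum.elim_comp_inl_inr w, h1, h2, Sum.elim_zero_zero]

/-- Joint-observability Lemma (Lemma 3 of the paper): under strong
connectivity and joint observability, `Tᵀ(L̂ ⊗ Iₙ)T + G ⪰ μI` for some `μ > 0`;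
equivalently this symmetric matrix is positive definite. -/
theorem stmt_2 {N n₁ n₂ : ℕ} (hN : 2 ≤ N) (Adj : Matrix (Fin N) (Fin N) ℝ)
    (hAdj : ∀ i j, Adj i j = 0 ∨ Adj i j = 1)
    (hconn : StronglyConnected Adj)
    (r : Fin N → ℝ) (hr : ∀ i, 0 < r i) (hrL : r ᵥ* lap Adj = 0)
    (hrsum : (∑ i, r i) = (N : ℝ))
    (Lh : Matrix (Fin N) (Fin N) ℝ)
    (hLh : Lh = Matrix.diagonal r * lap Adj + (lap Adj)ᵀ * Matrix.diagonal r)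
    (T1 : Fin N → Matrix (Fin n₁) (Fin n₁) ℝ) (hT1 : ∀ i, (T1 i)ᵀ * T1 i = 1)
    (T2 : Fin N → Matrix (Fin n₂) (Fin n₂) ℝ) (hT2 : ∀ i, (T2 i)ᵀ * T2 i = 1)
    (v1 v2 : Fin N → ℕ) (hv1 : ∀ i, v1 i ≤ n₁) (hv2 : ∀ i, v2 i ≤ n₂)
    (g : Fin N → ℝ) (hg : ∀ i, 0 < g i)
    (hobs : ∀ (w1 : Fin n₁ → ℝ) (w2 : Fin n₂ → ℝ),
      (∀ i, (∀ a : Fin n₁, (a : ℕ) < v1 i → ((T1 i)ᵀ *ᵥ w1) a = 0) ∧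
            (∀ b : Fin n₂, (b : ℕ) < v2 i → ((T2 i)ᵀ *ᵥ w2) b = 0)) →
      w1 = 0 ∧ w2 = 0)
    (T G : Matrix (Fin N × (Fin n₁ ⊕ Fin n₂)) (Fin N × (Fin n₁ ⊕ Fin n₂)) ℝ)
    (hT : T = bdiagR (fun i => Matrix.fromBlocks (T1 i) 0 0 (T2 i)))
    (hG : G = bdiagR (fun i => Matrix.fromBlocks
        (Matrix.diagonal fun a : Fin n₁ => if (a : ℕ) < v1 i then g i else 0) 0 0
        (Matrix.diagonal fun b : Fin n₂ => if (b : ℕ) < v2 i then g i else 0))) :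
    (∃ μ : ℝ, 0 < μ ∧
      (Tᵀ * (Lh ⊗ₖ (1 : Matrix (Fin n₁ ⊕ Fin n₂) (Fin n₁ ⊕ Fin n₂) ℝ)) * T + G
        - μ • 1).PosSemidef) ∧
    (Tᵀ * (Lh ⊗ₖ (1 : Matrix (Fin n₁ ⊕ Fin n₂) (Fin n₁ ⊕ Fin n₂) ℝ)) * T + G).PosDef :=
  stmt_2_general Adj hAdj hconn r hr hrL Lh hLh T1 hT1 T2 hT2 v1 v2 g hg hobs T G hT hG
end

section
/- Let (E, A) be a regular matrix pencil of real n×n matrices. If there exist a symmetric positive semidefinite matrix X ∈ ℝ^{n×n} and a symmetric positive definite matrix Y ∈ ℝ^{n×n} such that EᵀXA + AᵀXE = −EᵀYE, then the pencil (E, A) is admissible. -/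
open Matrix
open scoped Kronecker

/-!
Stability: if `det (z E - A) = 0`, pick `v ≠ 0` with `A v = z E v`. Regularity forces
`u := E v ≠ 0`, and the hermitian form of the Lyapunov identity at `v` reads
`2 Re z · u*Xu = -u*Yu < 0` with `u*Xu ≥ 0`, so `Re z < 0`.

Impulse-freeness: for `v ∈ ker E` with `A v = E w`, the identity applied to `v` gives
`X E w = 0`, and then its form at `w` gives `E w = 0`; so `A v = 0` and regularity gives `v = 0`.
Hence `ker E ∩ A⁻¹(im E) = 0` and `im E ⊕ A (ker E)` is the whole space. Taking preimages of a
basis of `im E` plus a basis of `ker E` in the domain, and that basis of `im E` plus the image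
under `A` of the basis of `ker E` in the codomain, the pencil becomes
`(diag (I, 0), [[B, 0], [D, I]])`, whose determinant is `± charpoly B`, of degree `rank E`.
-/

open Polynomial Module

section Pencil

variable {m : Type*} [Fintype m] [DecidableEq m]

theorem aeval_pencilPoly {K : Type*} [CommRing K] [Algebra ℝ K] (E A : Matrix m m ℝ) (z : K) :
    aeval z (pencilPoly E A) = (z • E.map (algebraMap ℝ K) - A.map (algebraMap ℝ K)).det := by
  rw [pencilPoly, AlgHom.map_det]
  congr 1
  ext i j
  simp [smul_eq_mul]
  exact mul_comm _ _

theorem PencilRegular.eq_zero_of_mulVec_eq_zero {K : Type*} [Field K] [Infinite K] [Algebra ℝ K]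
    {E A : Matrix m m ℝ} (hreg : PencilRegular E A) {v : m → K}
    (hE : E.map (algebraMap ℝ K) *ᵥ v = 0) (hA : A.map (algebraMap ℝ K) *ᵥ v = 0) : v = 0 := by
  by_contra hv
  refine hreg ((Polynomial.map_eq_zero_iff (algebraMap ℝ K).injective).mp
    (Polynomial.funext fun z => ?_))
  rw [eval_map_algebraMap, aeval_pencilPoly, eval_zero, ← exists_mulVec_eq_zero_iff]
  exact ⟨v, hv, by rw [sub_mulVec, smul_mulVec, hE, hA, smul_zero, sub_zero]⟩

theorem pencilPoly_mul_mul (P Q E A : Matrix m m ℝ) :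
    pencilPoly (P * E * Q) (P * A * Q) = C (P.det * Q.det) * pencilPoly E A := by
  have h : (X : ℝ[X]) • (P * E * Q).map C - (P * A * Q).map C
      = P.map C * ((X : ℝ[X]) • E.map C - A.map C) * Q.map C := by
    simp only [Matrix.map_mul, mul_sub, sub_mul, Matrix.mul_smul, Matrix.smul_mul]
  have hdet (M : Matrix m m ℝ) : (M.map C).det = C M.det := (RingHom.map_det C M).symm
  rw [pencilPoly, h, det_mul, det_mul, hdet, hdet, pencilPoly, C_mul]
  ring

theorem pencilPoly_reindex {m' : Type*} [Fintype m'] [DecidableEq m'] (e : m ≃ m')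
    (E A : Matrix m m ℝ) : pencilPoly (reindex e e E) (reindex e e A) = pencilPoly E A := by
  rw [pencilPoly, pencilPoly, ← det_reindex_self e]
  rfl

theorem natDegree_pencilPoly_toMatrix {ι : Type*} [Fintype ι] [DecidableEq ι]
    (b c : Basis ι ℝ (m → ℝ)) (E A : Matrix m m ℝ) :
    (pencilPoly (LinearMap.toMatrix b c E.mulVecLin)
      (LinearMap.toMatrix b c A.mulVecLin)).natDegree = (pencilPoly E A).natDegree := by
  let e : ι ≃ m := Fintype.equivOfCardEq <| by
    rw [← finrank_eq_card_basis b, finrank_fintype_fun_eq_card]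
  let std := Pi.basisFun ℝ m
  have hfactor (M : Matrix m m ℝ) : M = std.toMatrix (c.reindex e) *
      reindex e e (LinearMap.toMatrix b c M.mulVecLin) * (b.reindex e).toMatrix std := by
    have : reindex e e (LinearMap.toMatrix b c M.mulVecLin)
        = LinearMap.toMatrix (b.reindex e) (c.reindex e) M.mulVecLin := by
      ext i j
      simp [LinearMap.toMatrix_apply]
    rw [this, basis_toMatrix_mul_linearMap_toMatrix_mul_basis_toMatrix,
      LinearMap.toMatrix_eq_toMatrix', ← Matrix.toLin'_apply', LinearMap.toMatrix'_toLin']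
  have hunit : (std.toMatrix (c.reindex e)).det * ((b.reindex e).toMatrix std).det ≠ 0 := by
    let := std.invertibleToMatrix (c.reindex e)
    let := (b.reindex e).invertibleToMatrix std
    exact mul_ne_zero (isUnit_det_of_invertible _).ne_zero (isUnit_det_of_invertible _).ne_zero
  conv_rhs => rw [hfactor E, hfactor A]
  rw [pencilPoly_mul_mul, natDegree_C_mul hunit, pencilPoly_reindex]

theorem natDegree_pencilPoly_fromBlocks {ι κ : Type*} [Fintype ι] [DecidableEq ι] [Fintype κ]
    [DecidableEq κ] (B : Matrix ι ι ℝ) (D : Matrix κ ι ℝ) :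
    (pencilPoly (fromBlocks 1 0 0 (0 : Matrix κ κ ℝ)) (fromBlocks B 0 D 1)).natDegree
      = Fintype.card ι := by
  have hblocks : (X : ℝ[X]) • (fromBlocks 1 0 0 (0 : Matrix κ κ ℝ)).map C
      - (fromBlocks B 0 D 1).map C = fromBlocks (charmatrix B) 0 (-D.map C) (-1) := by
    ext (i | j) (i' | j') <;>
      simp [charmatrix_apply, one_apply, diagonal_apply, apply_ite C]
  have hpoly : pencilPoly (fromBlocks 1 0 0 (0 : Matrix κ κ ℝ)) (fromBlocks B 0 D 1)
      = B.charpoly * C ((-1) ^ Fintype.card κ) := by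
    rw [pencilPoly, hblocks, det_fromBlocks_zero₁₂, det_neg, det_one, mul_one, charpoly]
    simp
  rw [hpoly, natDegree_mul_C (pow_ne_zero _ (neg_ne_zero.mpr one_ne_zero)),
    charpoly_natDegree_eq_dim]

end Pencil

open scoped MatrixOrder ComplexOrder in
theorem Matrix.PosSemidef.map_ofReal {m : Type*} [Fintype m] [DecidableEq m] {X : Matrix m m ℝ}
    (hX : X.PosSemidef) : (X.map (algebraMap ℝ ℂ)).PosSemidef := by
  obtain ⟨B, rfl⟩ := CStarAlgebra.nonneg_iff_eq_star_mul_self.mp hX.nonneg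
  rw [Matrix.map_mul, star_eq_conjTranspose, conjTranspose_map _ fun x => by simp]
  exact posSemidef_conjTranspose_mul_self _

open scoped ComplexOrder in
theorem Matrix.PosDef.map_ofReal {m : Type*} [Fintype m] [DecidableEq m] {Y : Matrix m m ℝ}
    (hY : Y.PosDef) : (Y.map (algebraMap ℝ ℂ)).PosDef := by
  rw [hY.posSemidef.map_ofReal.posDef_iff_det_ne_zero, ← RingHom.mapMatrix_apply,
    ← RingHom.map_det]
  exact (_root_.map_ne_zero _).mpr hY.det_pos.ne'

section Lyapunov

open scoped ComplexOrder

variable {m : Type*} [Fintype m]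

theorem Matrix.dotProduct_conjTranspose_mul_mul_mulVec {R : Type*} [CommSemiring R] [StarRing R]
    (M N P : Matrix m m R) (x y : m → R) :
    star x ⬝ᵥ (Mᴴ * N * P) *ᵥ y = star (M *ᵥ x) ⬝ᵥ N *ᵥ P *ᵥ y := by
  rw [← mulVec_mulVec, ← mulVec_mulVec, dotProduct_mulVec, star_mulVec]

theorem mulVec_eq_zero_of_lyapunov {𝕜 : Type*} [RCLike 𝕜] {E A X Y : Matrix m m 𝕜}
    (hX : X.PosSemidef) (hY : Y.PosDef) (hlyap : Eᴴ * X * A + Aᴴ * X * E = -(Eᴴ * Y * E))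
    {v w : m → 𝕜} (hv : E *ᵥ v = 0) (hw : A *ᵥ v = E *ᵥ w) : E *ᵥ w = 0 := by
  have hXu : X *ᵥ E *ᵥ w = 0 := by
    have h := congrArg (fun M => star w ⬝ᵥ M *ᵥ v) hlyap
    simp only [add_mulVec, neg_mulVec, dotProduct_add, dotProduct_neg,
      dotProduct_conjTranspose_mul_mul_mulVec, hv, hw, mulVec_zero, dotProduct_zero,
      add_zero, neg_zero] at h
    exact (hX.dotProduct_mulVec_zero_iff _).mp h
  have hYu : star (E *ᵥ w) ⬝ᵥ Y *ᵥ E *ᵥ w = 0 := by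
    have h := congrArg (fun M => star w ⬝ᵥ M *ᵥ w) hlyap
    simp only [add_mulVec, neg_mulVec, dotProduct_add, dotProduct_neg,
      dotProduct_conjTranspose_mul_mul_mulVec, hXu, dotProduct_zero, add_zero] at h
    rw [dotProduct_mulVec, ← hX.isHermitian.eq, ← star_mulVec, hXu, star_zero,
      zero_dotProduct] at h
    exact neg_eq_zero.mp h.symm
  by_contra hu
  exact (hY.dotProduct_mulVec_pos hu).ne' hYu

theorem re_neg_of_lyapunov {E A X Y : Matrix m m ℂ}
    (hX : X.PosSemidef) (hY : Y.PosDef) (hlyap : Eᴴ * X * A + Aᴴ * X * E = -(Eᴴ * Y * E))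
    {v : m → ℂ} {z : ℂ} (hAv : A *ᵥ v = z • E *ᵥ v) (hEv : E *ᵥ v ≠ 0) : z.re < 0 := by
  have h := congrArg (fun M => star v ⬝ᵥ M *ᵥ v) hlyap
  simp only [add_mulVec, neg_mulVec, dotProduct_add, dotProduct_neg,
    dotProduct_conjTranspose_mul_mul_mulVec, hAv, mulVec_smul, dotProduct_smul, star_smul,
    smul_dotProduct] at h
  obtain ⟨hq, hq'⟩ := Complex.nonneg_iff.mp (hX.dotProduct_mulVec_nonneg (E *ᵥ v))
  have hp := (Complex.pos_iff.mp (hY.dotProduct_mulVec_pos hEv)).1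
  have hre := congrArg Complex.re h
  simp only [smul_eq_mul, Complex.add_re, Complex.mul_re, Complex.neg_re,
    Complex.star_def, Complex.conj_re, Complex.conj_im] at hre
  nlinarith

theorem pencilStable_of_lyapunov [DecidableEq m] {E A X Y : Matrix m m ℝ}
    (hreg : PencilRegular E A) (hX : X.PosSemidef) (hY : Y.PosDef)
    (hlyap : Eᴴ * X * A + Aᴴ * X * E = -(Eᴴ * Y * E)) : PencilStable E A := by
  intro z hz
  rw [aeval_pencilPoly, ← exists_mulVec_eq_zero_iff] at hz
  obtain ⟨v, hv, hzv⟩ := hz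
  have hAv : A.map (algebraMap ℝ ℂ) *ᵥ v = z • E.map (algebraMap ℝ ℂ) *ᵥ v := by
    rw [sub_mulVec, smul_mulVec, sub_eq_zero] at hzv
    exact hzv.symm
  have hEv : E.map (algebraMap ℝ ℂ) *ᵥ v ≠ 0 := fun h =>
    hv (hreg.eq_zero_of_mulVec_eq_zero h (by rw [hAv, h, smul_zero]))
  refine re_neg_of_lyapunov hX.map_ofReal hY.map_ofReal ?_ hAv hEv
  have hc : Function.Semiconj (algebraMap ℝ ℂ) star star := fun x => by simp
  simpa only [map_add, map_neg, map_mul, RingHom.mapMatrix_apply, conjTranspose_map _ hc] using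
    congrArg (RingHom.mapMatrix (algebraMap ℝ ℂ)) hlyap

end Lyapunov

section NormalForm

variable {m : Type*} [Fintype m] {E A : Matrix m m ℝ}

theorem linearIndependent_sumElim_range_image_ker
    (hindex : ∀ v w, E *ᵥ v = 0 → A *ᵥ v = E *ᵥ w → v = 0) {ι κ : Type*}
    (rb : Basis ι ℝ (LinearMap.range E.mulVecLin)) (kb : Basis κ ℝ (LinearMap.ker E.mulVecLin)) :
    LinearIndependent ℝ (Sum.elim (fun i => (rb i : m → ℝ)) (fun j => A *ᵥ kb j)) := by
  have hinj : LinearMap.ker (A.mulVecLin ∘ₗ (LinearMap.ker E.mulVecLin).subtype) = ⊥ :=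
    LinearMap.ker_eq_bot'.mpr fun v hv => Subtype.ext (hindex v 0 v.2 (by simpa using hv))
  refine (rb.linearIndependent.map' _ (Submodule.ker_subtype _)).sum_type
    (kb.linearIndependent.map' _ hinj) (Submodule.disjoint_def.mpr fun x hx hx' => ?_)
  obtain ⟨w, rfl⟩ : x ∈ LinearMap.range E.mulVecLin :=
    Submodule.span_le.mpr (by rintro _ ⟨i, rfl⟩; exact (rb i).2) hx
  obtain ⟨v, hv, hvw⟩ : E.mulVecLin w ∈ (LinearMap.ker E.mulVecLin).map A.mulVecLin :=
    Submodule.span_le.mpr (by rintro _ ⟨j, rfl⟩; exact Submodule.mem_map_of_mem (kb j).2) hx'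
  rw [← hvw, hindex v w hv hvw, map_zero]

theorem linearIndependent_sumElim_ker {ι κ : Type*}
    (rb : Basis ι ℝ (LinearMap.range E.mulVecLin)) (kb : Basis κ ℝ (LinearMap.ker E.mulVecLin))
    (w : ι → m → ℝ) (hw : ∀ i, E *ᵥ w i = rb i) :
    LinearIndependent ℝ (Sum.elim w (fun j => (kb j : m → ℝ))) := by
  have hEw : LinearIndependent ℝ (E.mulVecLin ∘ w) := by
    rw [show E.mulVecLin ∘ w = (LinearMap.range E.mulVecLin).subtype ∘ rb from funext hw]
    exact rb.linearIndependent.map' _ (Submodule.ker_subtype _)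
  have hkb : LinearIndependent ℝ (fun j => (kb j : m → ℝ)) :=
    kb.linearIndependent.map' (LinearMap.ker E.mulVecLin).subtype (Submodule.ker_subtype _)
  have hdisj : Disjoint (Submodule.span ℝ (Set.range w))
      (Submodule.span ℝ (Set.range fun j => (kb j : m → ℝ))) := by
    refine (Submodule.range_ker_disjoint hEw).mono_right (Submodule.span_le.mpr ?_)
    rintro _ ⟨j, rfl⟩
    exact (kb j).2
  exact (hEw.of_comp _).sum_type hkb hdisj

theorem exists_basis_toMatrix_eq_fromBlocks
    (hindex : ∀ v w, E *ᵥ v = 0 → A *ᵥ v = E *ᵥ w → v = 0) :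
    ∃ (b c : Basis (Fin E.rank ⊕ Fin (finrank ℝ (LinearMap.ker E.mulVecLin))) ℝ (m → ℝ))
      (B : Matrix (Fin E.rank) (Fin E.rank) ℝ)
      (D : Matrix (Fin (finrank ℝ (LinearMap.ker E.mulVecLin))) (Fin E.rank) ℝ),
      LinearMap.toMatrix b c E.mulVecLin = fromBlocks 1 0 0 0 ∧
      LinearMap.toMatrix b c A.mulVecLin = fromBlocks B 0 D 1 := by
  let rb : Basis (Fin E.rank) ℝ (LinearMap.range E.mulVecLin) := finBasis ℝ _
  let kb := finBasis ℝ (LinearMap.ker E.mulVecLin)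
  choose w hw using fun i => LinearMap.mem_range.mp (rb i).2
  have hcard : Fintype.card (Fin E.rank ⊕ Fin (finrank ℝ (LinearMap.ker E.mulVecLin)))
      = finrank ℝ (m → ℝ) := by
    rw [Fintype.card_sum, Fintype.card_fin, Fintype.card_fin, Matrix.rank,
      LinearMap.finrank_range_add_finrank_ker]
  obtain ⟨b, hb⟩ : ∃ b : Basis _ ℝ (m → ℝ), ⇑b = Sum.elim w fun j => (kb j : m → ℝ) :=
    ⟨_, coe_basisOfLinearIndependentOfCardEqFinrank' _
      (linearIndependent_sumElim_ker rb kb w hw) hcard⟩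
  obtain ⟨c, hc⟩ : ∃ c : Basis _ ℝ (m → ℝ),
      ⇑c = Sum.elim (fun i => (rb i : m → ℝ)) fun j => A *ᵥ kb j :=
    ⟨_, coe_basisOfLinearIndependentOfCardEqFinrank' _
      (linearIndependent_sumElim_range_image_ker hindex rb kb) hcard⟩
  have hEl (i) : E *ᵥ b (.inl i) = c (.inl i) := by
    rw [hb, hc]
    exact hw i
  have hEr (j) : E *ᵥ b (.inr j) = 0 := by
    rw [hb]
    exact (kb j).2
  have hAr (j) : A *ᵥ b (.inr j) = c (.inr j) := by
    rw [hb, hc]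
    rfl
  refine ⟨b, c, (LinearMap.toMatrix b c A.mulVecLin).toBlocks₁₁,
    (LinearMap.toMatrix b c A.mulVecLin).toBlocks₂₁, ?_, ?_⟩
  · ext (i | j) (i' | j') <;>
      simp [LinearMap.toMatrix_apply, hEl, hEr, Finsupp.single_apply, one_apply, eq_comm]
  · conv_lhs => rw [← fromBlocks_toBlocks (LinearMap.toMatrix b c A.mulVecLin)]
    congr 1 <;> ext i j <;>
      simp [toBlocks₁₂, toBlocks₂₂, LinearMap.toMatrix_apply, hAr, Finsupp.single_apply,
        one_apply, eq_comm]

theorem pencilImpulseFree_of_ker_inf_comap_range [DecidableEq m]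
    (hindex : ∀ v w, E *ᵥ v = 0 → A *ᵥ v = E *ᵥ w → v = 0) : PencilImpulseFree E A := by
  obtain ⟨b, c, B, D, hE, hA⟩ := exists_basis_toMatrix_eq_fromBlocks hindex
  rw [PencilImpulseFree, ← natDegree_pencilPoly_toMatrix b c, hE, hA,
    natDegree_pencilPoly_fromBlocks, Fintype.card_fin]

end NormalForm

/-- Lyapunov sufficiency for admissibility of a regular pencil:
if `X ⪰ 0` symmetric and `Y ≻ 0` symmetric satisfy `EᵀXA + AᵀXE = −EᵀYE`, then `(E, A)`
is admissible. -/
theorem stmt_6 {n : ℕ} (E A : Matrix (Fin n) (Fin n) ℝ)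
    (hreg : PencilRegular E A)
    (X Y : Matrix (Fin n) (Fin n) ℝ)
    (hX : X.PosSemidef) (hY : Y.PosDef)
    (hlyap : Eᵀ * X * A + Aᵀ * X * E = -(Eᵀ * Y * E)) :
    PencilAdmissible E A := by
  have hlyap' : Eᴴ * X * A + Aᴴ * X * E = -(Eᴴ * Y * E) := by
    simpa only [conjTranspose_eq_transpose_of_trivial] using hlyap
  refine ⟨hreg, pencilStable_of_lyapunov hreg hX hY hlyap',
    pencilImpulseFree_of_ker_inf_comap_range fun v w hv hw => ?_⟩
  have hEw := mulVec_eq_zero_of_lyapunov hX hY hlyap' hv hw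
  exact hreg.eq_zero_of_mulVec_eq_zero (K := ℝ) (by simpa using hv) (by simpa [hEw] using hw)
end

section
/- Let n₁, n₂ ≥ 0, 0 ≤ v ≤ n₁, γ > 0, and let A_o ∈ ℝ^{v×v}, A_r ∈ ℝ^{(n₁−v)×v}, A_u ∈ ℝ^{(n₁−v)×(n₁−v)}, N_o ∈ ℝ^{n₂×n₂}, C₁ ∈ ℝ^{p×v}, C₂ ∈ ℝ^{p×n₂}, H₁ ∈ ℝ^{v×p}, H₂ ∈ ℝ^{n₂×p}. In the coordinate splitting (v, n₁−v, n₂) define Ẽ = diag(I_v, I_{n₁−v}, N_o) and let Ã be the matrix with blocks Ã(1,1) = A_o − H₁C₁, Ã(1,3) = −H₁C₂, Ã(2,1) = A_r, Ã(2,2) = A_u, Ã(3,1) = −H₂C₁, Ã(3,3) = I_{n₂} − H₂C₂, and zero elsewhere. Let W̃_o = [[W₁₁, W₁₂],[W₂₁, W₂₂]] (blocks of sizes v and n₂) be symmetric and satisfy the reduced Lyapunov equation Ẽ_oᵀW̃_o(Ã_o − HC_o) + (Ã_o − HC_o)ᵀW̃_oẼ_o = −γ Ẽ_oᵀẼ_o,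 where Ẽ_o = diag(I_v, N_o), Ã_o = diag(A_o, I_{n₂}), H = col(H₁, H₂), C_o = [C₁, C₂]. Let W̃ be the symmetric matrix whose blocks in the splitting (v, n₁−v, n₂) are W₁₁, I_{n₁−v}, W₂₂ on the diagonal, W₁₂ in position (1,3), W₂₁ in position (3,1), and zero elsewhere. Then ẼᵀW̃Ã + ÃᵀW̃Ẽ = Ẽᵀ(Ỹ + Ỹ_u)Ẽ, where Ỹ = −γ·diag(I_v, 0_{(n₁−v)×(n₁−v)}, I_{n₂}) and Ỹ_u is the symmetric matrix with A_rᵀ in position (1,2), A_r in position (2,1), A_u + A_uᵀ in position (2,2), and zero elsewhere. -/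
/-!
Listing the unobservable coordinates last, `Ẽ` and `W̃` become `diag(Ẽ_o, I)` and
`diag(W̃_o, I)`, and `Ã` becomes block lower triangular with `Ã_o − H C_o` in the corner and
last block row `[A_r 0 | A_u]`. The generalized Lyapunov form then splits blockwise: the
observable corner is the reduced equation, and the remaining blocks are those of `Ỹ_u`, because
the last block row of `Ã` vanishes on the fast coordinates, where `Ẽ` differs from the identity.
-/

open Matrix
open scoped Kronecker

def Equiv.sumRightComm (α β γ : Type*) : (α ⊕ β) ⊕ γ ≃ (α ⊕ γ) ⊕ β :=
  (Equiv.sumAssoc α β γ).trans <|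
    (Equiv.sumCongr (Equiv.refl α) (Equiv.sumComm β γ)).trans (Equiv.sumAssoc α γ β).symm

namespace Matrix

variable {R : Type*} [CommRing R] {m n : Type*} [Fintype m] [Fintype n] [DecidableEq m]
  [DecidableEq n]

theorem lyapunov_fromBlocks_lowerTriangular {E W A : Matrix n n R} {B : Matrix m n R}
    (U : Matrix m m R) {c : R} (hLyap : Eᵀ * W * A + Aᵀ * W * E = c • (Eᵀ * E))
    (hBE : B * E = B) :
    (fromBlocks E 0 0 1)ᵀ * fromBlocks W 0 0 1 * fromBlocks A 0 B U
        + (fromBlocks A 0 B U)ᵀ * fromBlocks W 0 0 1 * fromBlocks E 0 0 1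
      = (fromBlocks E 0 0 1)ᵀ * (c • fromBlocks 1 0 0 0 + fromBlocks 0 Bᵀ B (U + Uᵀ))
          * fromBlocks E 0 0 1 := by
  have hEB : Eᵀ * Bᵀ = Bᵀ := by rw [← transpose_mul, hBE]
  simp only [fromBlocks_transpose, fromBlocks_multiply, fromBlocks_smul, fromBlocks_add,
    transpose_zero, transpose_one, Matrix.mul_zero, Matrix.zero_mul, Matrix.mul_one,
    Matrix.one_mul, add_zero, zero_add, smul_zero, Matrix.mul_smul, Matrix.smul_mul, hLyap, hBE,
    hEB]

end Matrix

theorem stmt_8_general {v w n₂ p : ℕ} (γ : ℝ)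
    (Ao : Matrix (Fin v) (Fin v) ℝ) (Ar : Matrix (Fin w) (Fin v) ℝ)
    (Au : Matrix (Fin w) (Fin w) ℝ) (No : Matrix (Fin n₂) (Fin n₂) ℝ)
    (C1 : Matrix (Fin p) (Fin v) ℝ) (C2 : Matrix (Fin p) (Fin n₂) ℝ)
    (H1 : Matrix (Fin v) (Fin p) ℝ) (H2 : Matrix (Fin n₂) (Fin p) ℝ)
    (W11 : Matrix (Fin v) (Fin v) ℝ) (W12 : Matrix (Fin v) (Fin n₂) ℝ)
    (W21 : Matrix (Fin n₂) (Fin v) ℝ) (W22 : Matrix (Fin n₂) (Fin n₂) ℝ)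
    (Wo : Matrix (Fin v ⊕ Fin n₂) (Fin v ⊕ Fin n₂) ℝ)
    (hWo : Wo = Matrix.fromBlocks W11 W12 W21 W22)
    (Eo Aoo : Matrix (Fin v ⊕ Fin n₂) (Fin v ⊕ Fin n₂) ℝ)
    (hEo : Eo = Matrix.fromBlocks 1 0 0 No)
    (hAoo : Aoo = Matrix.fromBlocks Ao 0 0 1
        - Matrix.fromRows H1 H2 * Matrix.fromCols C1 C2)
    (hLyap : Eoᵀ * Wo * Aoo + Aooᵀ * Wo * Eo = (-γ) • (Eoᵀ * Eo))
    (Et At Wt Yt Yu : Matrix ((Fin v ⊕ Fin w) ⊕ Fin n₂) ((Fin v ⊕ Fin w) ⊕ Fin n₂) ℝ)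
    (hEt : Et = Matrix.fromBlocks 1 0 0 No)
    (hAt : At = Matrix.fromBlocks
        (Matrix.fromBlocks (Ao - H1 * C1) 0 Ar Au)
        (Matrix.fromRows (-(H1 * C2)) 0)
        (Matrix.fromCols (-(H2 * C1)) 0)
        (1 - H2 * C2))
    (hWt : Wt = Matrix.fromBlocks
        (Matrix.fromBlocks W11 0 0 1)
        (Matrix.fromRows W12 0)
        (Matrix.fromCols W21 0)
        W22)
    (hYt : Yt = (-γ) • Matrix.fromBlocks (Matrix.fromBlocks 1 0 0 0) 0 0 1)
    (hYu : Yu = Matrix.fromBlocks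
        (Matrix.fromBlocks 0 Arᵀ Ar (Au + Auᵀ)) 0 0 0) :
    Etᵀ * Wt * At + Atᵀ * Wt * Et = Etᵀ * (Yt + Yu) * Et := by
  set σ := Equiv.sumRightComm (Fin v) (Fin w) (Fin n₂)
  set B : Matrix (Fin w) (Fin v ⊕ Fin n₂) ℝ := Matrix.fromCols Ar 0
  have hE : Et = (fromBlocks Eo 0 0 1).submatrix σ σ := by
    subst hEt hEo; ext ((i|i)|i) ((j|j)|j) <;> simp [σ, Equiv.sumRightComm, one_apply]
  have hW : Wt = (fromBlocks Wo 0 0 1).submatrix σ σ := by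
    subst hWt hWo; ext ((i|i)|i) ((j|j)|j) <;> simp [σ, Equiv.sumRightComm, one_apply]
  have hA : At = (fromBlocks Aoo 0 B Au).submatrix σ σ := by
    subst hAt hAoo; ext ((i|i)|i) ((j|j)|j) <;> simp [σ, B, Equiv.sumRightComm, one_apply]
  have hY :
      Yt + Yu = ((-γ) • fromBlocks 1 0 0 0 + fromBlocks 0 Bᵀ B (Au + Auᵀ)).submatrix σ σ := by
    subst hYt hYu; ext ((i|i)|i) ((j|j)|j) <;> simp [σ, B, Equiv.sumRightComm, one_apply]
  have hBE : B * Eo = B := by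
    simp [B, hEo, fromCols_mul_fromBlocks]
  rw [hE, hW, hA, hY]
  simp only [transpose_submatrix, submatrix_mul_equiv]
  exact congrArg (submatrix · σ σ) (lyapunov_fromBlocks_lowerTriangular Au hLyap hBE)

/-- Per-agent generalized Lyapunov identity used in the proof of Theorem 1:
the reduced Lyapunov equation on the observable part transfers to the full per-agent error
matrix, in the coordinate splitting `(v, n₁ − v, n₂)` (here `w := n₁ − v`). -/
theorem stmt_8 {v w n₂ p : ℕ} (γ : ℝ) (hγ : 0 < γ)
    (Ao : Matrix (Fin v) (Fin v) ℝ) (Ar : Matrix (Fin w) (Fin v) ℝ)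
    (Au : Matrix (Fin w) (Fin w) ℝ) (No : Matrix (Fin n₂) (Fin n₂) ℝ)
    (C1 : Matrix (Fin p) (Fin v) ℝ) (C2 : Matrix (Fin p) (Fin n₂) ℝ)
    (H1 : Matrix (Fin v) (Fin p) ℝ) (H2 : Matrix (Fin n₂) (Fin p) ℝ)
    (W11 : Matrix (Fin v) (Fin v) ℝ) (W12 : Matrix (Fin v) (Fin n₂) ℝ)
    (W21 : Matrix (Fin n₂) (Fin v) ℝ) (W22 : Matrix (Fin n₂) (Fin n₂) ℝ)
    (Wo : Matrix (Fin v ⊕ Fin n₂) (Fin v ⊕ Fin n₂) ℝ)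
    (hWo : Wo = Matrix.fromBlocks W11 W12 W21 W22)
    (hWoSymm : Wo.IsSymm)
    (Eo Aoo : Matrix (Fin v ⊕ Fin n₂) (Fin v ⊕ Fin n₂) ℝ)
    (hEo : Eo = Matrix.fromBlocks 1 0 0 No)
    (hAoo : Aoo = Matrix.fromBlocks Ao 0 0 1
        - Matrix.fromRows H1 H2 * Matrix.fromCols C1 C2)
    (hLyap : Eoᵀ * Wo * Aoo + Aooᵀ * Wo * Eo = (-γ) • (Eoᵀ * Eo))
    (Et At Wt Yt Yu : Matrix ((Fin v ⊕ Fin w) ⊕ Fin n₂) ((Fin v ⊕ Fin w) ⊕ Fin n₂) ℝ)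
    (hEt : Et = Matrix.fromBlocks 1 0 0 No)
    (hAt : At = Matrix.fromBlocks
        (Matrix.fromBlocks (Ao - H1 * C1) 0 Ar Au)
        (Matrix.fromRows (-(H1 * C2)) 0)
        (Matrix.fromCols (-(H2 * C1)) 0)
        (1 - H2 * C2))
    (hWt : Wt = Matrix.fromBlocks
        (Matrix.fromBlocks W11 0 0 1)
        (Matrix.fromRows W12 0)
        (Matrix.fromCols W21 0)
        W22)
    (hYt : Yt = (-γ) • Matrix.fromBlocks (Matrix.fromBlocks 1 0 0 0) 0 0 1)
    (hYu : Yu = Matrix.fromBlocks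
        (Matrix.fromBlocks 0 Arᵀ Ar (Au + Auᵀ)) 0 0 0) :
    Etᵀ * Wt * At + Atᵀ * Wt * Et = Etᵀ * (Yt + Yu) * Et :=
  stmt_8_general γ Ao Ar Au No C1 C2 H1 H2 W11 W12 W21 W22 Wo hWo Eo Aoo hEo hAoo hLyap Et At Wt Yt
    Yu hEt hAt hWt hYt hYu
end

section
/- Let a, b ≥ 1 and Ê = diag(I_a, 0_{b×b}). Let Λ = [[Λ₁₁, Λ₁₂],[Λ₂₁, Λ₂₂]] ∈ ℝ^{(a+b)×(a+b)} with Λ₂₂ ∈ ℝ^{b×b} invertible. Suppose X₁₁ ∈ ℝ^{a×a} is symmetric positive definite and satisfies X₁₁(Λ₁₁ − Λ₁₂Λ₂₂^{-1}Λ₂₁) + (Λ₁₁ − Λ₁₂Λ₂₂^{-1}Λ₂₁)ᵀX₁₁ ≺ 0. Set X₁₂ = −X₁₁Λ₁₂Λ₂₂^{-1} and choose any symmetric X₂₂ with X₂₂ ≻ X₁₂ᵀX₁₁^{-1}X₁₂. Then X = [[X₁₁, X₁₂],[X₁₂ᵀ, X₂₂]] is symmetric positive definite and ÊXΛ + ΛᵀXÊ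 = −diag(Y₁₁, 0_{b×b}) for some symmetric positive definite Y₁₁ ∈ ℝ^{a×a}; consequently the pencil (Ê, Λ) is admissible. -/
open Matrix
open scoped Kronecker

/-!
Write `S = Λ₁₁ - Λ₁₂ Λ₂₂⁻¹ Λ₂₁`. The choice of `X₁₂` kills the off-diagonal block of `Ê X Λ`,
so `Ê X Λ = diag(X₁₁ S, 0)` and, `X₁₁` being symmetric,
`Ê X Λ + Λᵀ X Ê = diag(X₁₁ S + Sᵀ X₁₁, 0)`. Positive definiteness of `X` is the Schur complement
criterion. Eliminating the algebraic block gives `det (s Ê - Λ) = det (-Λ₂₂) · det (s I - S)`, so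
the pencil is regular, impulse-free, and its finite spectrum is that of `S`; this is Hurwitz
because for an eigenvector `v` of `S` with eigenvalue `λ`,
`Re (v* (X₁₁ S + Sᵀ X₁₁) v) = 2 Re λ · Re (v* X₁₁ v)`.
-/

namespace Matrix

variable {m n : Type*} [Fintype m] [Fintype n]

theorem posDef_fromBlocks₁₁ {R : Type*} [CommRing R] [PartialOrder R] [StarRing R]
    [StarOrderedRing R] [DecidableEq m] {A : Matrix m m R} (B : Matrix m n R) (D : Matrix n n R)
    (hA : A.PosDef) [Invertible A] (hS : (D - Bᴴ * A⁻¹ * B).PosDef) :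
    (fromBlocks A B Bᴴ D).PosDef := by
  refine .of_dotProduct_mulVec_pos ((IsHermitian.fromBlocks₁₁ B D hA.1).2 hS.1) fun v hv => ?_
  rw [dotProduct_mulVec, ← Sum.elim_comp_inl_inr v, schur_complement_eq₁₁ B D _ _ hA.1,
    ← dotProduct_mulVec, ← dotProduct_mulVec (star (v ∘ Sum.inr))]
  by_cases hy : v ∘ Sum.inr = 0
  · have hx : v ∘ Sum.inl ≠ 0 := fun hx =>
      hv (by rw [← Sum.elim_comp_inl_inr v, hx, hy, Sum.elim_zero_zero])
    simpa [hy] using hA.dotProduct_mulVec_pos hx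
  · exact add_pos_of_nonneg_of_pos (hA.posSemidef.dotProduct_mulVec_nonneg _)
      (hS.dotProduct_mulVec_pos hy)

theorem re_star_dotProduct_map_ofReal_mulVec (M : Matrix n n ℝ) (v : n → ℂ) :
    (star v ⬝ᵥ M.map Complex.ofReal *ᵥ v).re
      = (fun i => (v i).re) ⬝ᵥ M *ᵥ (fun i => (v i).re)
        + (fun i => (v i).im) ⬝ᵥ M *ᵥ (fun i => (v i).im) := by
  simp only [dotProduct, mulVec, Complex.re_sum, Finset.mul_sum, ← Finset.sum_add_distrib]
  refine Finset.sum_congr rfl fun i _ => Finset.sum_congr rfl fun j _ => ?_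
  simp only [Pi.star_apply, map_apply, Complex.mul_re, Complex.mul_im, Complex.star_def,
    Complex.conj_re, Complex.conj_im, Complex.ofReal_re, Complex.ofReal_im]
  ring

theorem PosDef.re_star_dotProduct_map_ofReal_mulVec_pos {M : Matrix n n ℝ} (hM : M.PosDef)
    {v : n → ℂ} (hv : v ≠ 0) : 0 < (star v ⬝ᵥ M.map Complex.ofReal *ᵥ v).re := by
  rw [re_star_dotProduct_map_ofReal_mulVec]
  have hre := hM.posSemidef.dotProduct_mulVec_nonneg (fun i => (v i).re)
  have him := hM.posSemidef.dotProduct_mulVec_nonneg (fun i => (v i).im)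
  simp only [star_trivial] at hre him
  by_cases h : (fun i => (v i).re) = 0
  · have him' : (fun i => (v i).im) ≠ 0 := fun h' =>
      hv (funext fun i => Complex.ext (congrFun h i) (congrFun h' i))
    simpa [h] using hM.dotProduct_mulVec_pos him'
  · simpa using add_pos_of_pos_of_nonneg (hM.dotProduct_mulVec_pos h) him

theorem exists_mulVec_eq_smul_of_aeval_charpoly_eq_zero [DecidableEq n] {S : Matrix n n ℝ}
    {z : ℂ} (hz : Polynomial.aeval z S.charpoly = 0) :
    ∃ v ≠ 0, S.map Complex.ofReal *ᵥ v = z • v := by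
  have hdet : (scalar n z - S.map Complex.ofReal).det = 0 := by
    rw [← eval_charpoly, ← Complex.coe_algebraMap, charpoly_map, Polynomial.eval_map_algebraMap,
      hz]
  obtain ⟨v, hv, hSv⟩ := exists_mulVec_eq_zero_iff.mpr hdet
  refine ⟨v, hv, ?_⟩
  rw [sub_mulVec, sub_eq_zero] at hSv
  rw [← hSv, scalar_apply, ← smul_one_eq_diagonal, smul_mulVec, one_mulVec]

theorem isHurwitz_of_lyapunov [DecidableEq n] {P S : Matrix n n ℝ} (hP : P.PosDef)
    (hQ : (-(P * S + Sᵀ * P)).PosDef) : IsHurwitz S := by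
  intro z hz
  obtain ⟨v, hv, hSv⟩ := exists_mulVec_eq_smul_of_aeval_charpoly_eq_zero hz
  set Pc := P.map Complex.ofReal
  set Sc := S.map Complex.ofReal
  set c := star v ⬝ᵥ Pc *ᵥ v
  have hmap : (-(P * S + Sᵀ * P)).map Complex.ofReal = -(Pc * Sc + Scᴴ * Pc) := by
    ext i j
    simp [Pc, Sc, mul_apply]
  have hPS : star v ⬝ᵥ (Pc * Sc) *ᵥ v = z * c := by
    rw [← mulVec_mulVec, hSv, mulVec_smul, dotProduct_smul, smul_eq_mul]
  have hSP : star v ⬝ᵥ (Scᴴ * Pc) *ᵥ v = star z * c := by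
    rw [← mulVec_mulVec, dotProduct_mulVec, vecMul_conjTranspose, star_star, hSv, star_smul,
      smul_dotProduct, smul_eq_mul]
  -- `re (z c) + re (conj z c) = 2 re z re c`, whatever the imaginary part of `c`
  have hQv : (star v ⬝ᵥ (-(P * S + Sᵀ * P)).map Complex.ofReal *ᵥ v).re
      = -(2 * z.re * c.re) := by
    rw [hmap, neg_mulVec, add_mulVec, dotProduct_neg, dotProduct_add, hPS, hSP]
    simp only [Complex.neg_re, Complex.add_re, Complex.mul_re, Complex.star_def, Complex.conj_re,
      Complex.conj_im]
    ring
  have hc := hP.re_star_dotProduct_map_ofReal_mulVec_pos hv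
  have hq := hQ.re_star_dotProduct_map_ofReal_mulVec_pos hv
  rw [hQv] at hq
  nlinarith

theorem rank_fromBlocks_one_zero {K : Type*} [Field K] [DecidableEq m] :
    (fromBlocks 1 0 0 0 : Matrix (m ⊕ n) (m ⊕ n) K).rank = Fintype.card m := by
  classical
  rw [← diagonal_one, ← diagonal_zero, fromBlocks_diagonal, rank_diagonal, Fintype.card_subtype]
  simp [Finset.card_filter, Fintype.sum_sum_type]

section SemiExplicit

variable {R : Type*} [CommRing R] [DecidableEq m] [DecidableEq n]

theorem fromBlocks_one_zero_mul_mul_fromBlocks (X₁₁ : Matrix m m R) (X₂₁ : Matrix n m R)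
    (X₂₂ : Matrix n n R) {A₁₁ : Matrix m m R} {A₁₂ : Matrix m n R} {A₂₁ : Matrix n m R}
    {A₂₂ : Matrix n n R} (hA₂₂ : IsUnit A₂₂) :
    fromBlocks 1 0 0 0 * fromBlocks X₁₁ (-(X₁₁ * A₁₂ * A₂₂⁻¹)) X₂₁ X₂₂
        * fromBlocks A₁₁ A₁₂ A₂₁ A₂₂
      = fromBlocks (X₁₁ * (A₁₁ - A₁₂ * A₂₂⁻¹ * A₂₁)) 0 0 0 := by
  have hinv : A₂₂⁻¹ * A₂₂ = 1 := nonsing_inv_mul _ ((isUnit_iff_isUnit_det _).mp hA₂₂)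
  simp only [fromBlocks_multiply, Matrix.one_mul, Matrix.zero_mul, add_zero, Matrix.neg_mul,
    Matrix.mul_assoc, hinv, Matrix.mul_one, Matrix.mul_sub, ← sub_eq_add_neg, sub_self]

theorem fromBlocks_one_zero_lyapunov {X₁₁ : Matrix m m R} (hX₁₁ : X₁₁ᵀ = X₁₁)
    (X₂₂ : Matrix n n R) {A₁₁ : Matrix m m R} {A₁₂ : Matrix m n R} {A₂₁ : Matrix n m R}
    {A₂₂ : Matrix n n R} (hA₂₂ : IsUnit A₂₂) :
    let E : Matrix (m ⊕ n) (m ⊕ n) R := fromBlocks 1 0 0 0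
    let X := fromBlocks X₁₁ (-(X₁₁ * A₁₂ * A₂₂⁻¹)) (-(X₁₁ * A₁₂ * A₂₂⁻¹))ᵀ X₂₂
    let A := fromBlocks A₁₁ A₁₂ A₂₁ A₂₂
    E * X * A + Aᵀ * X * E = fromBlocks (X₁₁ * (A₁₁ - A₁₂ * A₂₂⁻¹ * A₂₁)
        + (A₁₁ - A₁₂ * A₂₂⁻¹ * A₂₁)ᵀ * X₁₁) 0 0 0 := by
  intro E X A
  have hE : Eᵀ = E := by simp [E, fromBlocks_transpose]
  have hX : Xᵀ = fromBlocks X₁₁ (-(X₁₁ * A₁₂ * A₂₂⁻¹)) (-(X₁₁ * A₁₂ * A₂₂⁻¹))ᵀ X₂₂ᵀ := by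
    rw [fromBlocks_transpose, transpose_transpose, hX₁₁]
  calc E * X * A + Aᵀ * X * E = E * X * A + (E * Xᵀ * A)ᵀ := by
        simp only [transpose_mul, hE, transpose_transpose, Matrix.mul_assoc]
    _ = _ := by
        rw [hX, fromBlocks_one_zero_mul_mul_fromBlocks _ _ _ hA₂₂,
          fromBlocks_one_zero_mul_mul_fromBlocks _ _ _ hA₂₂, fromBlocks_transpose, fromBlocks_add,
          transpose_mul, hX₁₁]
        simp

theorem pencilPoly_fromBlocks_one_zero
    (A₁₁ : Matrix m m ℝ) (A₁₂ : Matrix m n ℝ) (A₂₁ : Matrix n m ℝ) {A₂₂ : Matrix n n ℝ}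
    (hA₂₂ : IsUnit A₂₂) :
    pencilPoly (fromBlocks 1 0 0 0) (fromBlocks A₁₁ A₁₂ A₂₁ A₂₂)
      = Polynomial.C (-A₂₂).det * (A₁₁ - A₁₂ * A₂₂⁻¹ * A₂₁).charpoly := by
  open Polynomial in
  let := hA₂₂.invertible
  let : Invertible (C.mapMatrix A₂₂) := Invertible.map _ A₂₂
  let : Invertible (-C.mapMatrix A₂₂) := invertibleNeg _
  have hpencil : (X : ℝ[X]) • (fromBlocks 1 0 0 0 : Matrix (m ⊕ n) (m ⊕ n) ℝ).map C
      - (fromBlocks A₁₁ A₁₂ A₂₁ A₂₂).map C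
      = fromBlocks (charmatrix A₁₁) (-A₁₂.map C) (-A₂₁.map C) (-C.mapMatrix A₂₂) := by
    simp [fromBlocks_map, fromBlocks_smul, sub_eq_add_neg, fromBlocks_neg, fromBlocks_add,
      charmatrix, smul_one_eq_diagonal]
  have hschur : charmatrix A₁₁ - -A₁₂.map C * ⅟(-C.mapMatrix A₂₂) * -A₂₁.map C
      = charmatrix (A₁₁ - A₁₂ * A₂₂⁻¹ * A₂₁) := by
    rw [invOf_neg, ← map_invOf, invOf_eq_nonsing_inv]
    simp only [charmatrix, RingHom.mapMatrix_apply, Matrix.mul_neg, Matrix.neg_mul, neg_neg,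
      sub_neg_eq_add, map_sub, Matrix.map_mul]
    abel
  rw [pencilPoly, hpencil, det_fromBlocks₂₂, hschur, ← map_neg, ← RingHom.map_det]
  rfl

theorem pencilAdmissible_fromBlocks_one_zero
    {A₁₁ : Matrix m m ℝ} {A₁₂ : Matrix m n ℝ} {A₂₁ : Matrix n m ℝ} {A₂₂ : Matrix n n ℝ}
    (hA₂₂ : IsUnit A₂₂) (hS : IsHurwitz (A₁₁ - A₁₂ * A₂₂⁻¹ * A₂₁)) :
    PencilAdmissible (fromBlocks 1 0 0 0) (fromBlocks A₁₁ A₁₂ A₂₁ A₂₂) := by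
  have hc : (-A₂₂).det ≠ 0 := ((isUnit_iff_isUnit_det _).mp hA₂₂.neg).ne_zero
  refine ⟨?_, fun z hz => hS z ?_, ?_⟩
  · rw [PencilRegular, pencilPoly_fromBlocks_one_zero _ _ _ hA₂₂]
    exact mul_ne_zero (Polynomial.C_ne_zero.mpr hc) (charpoly_monic _).ne_zero
  · rw [pencilPoly_fromBlocks_one_zero _ _ _ hA₂₂, map_mul, Polynomial.aeval_C] at hz
    exact (mul_eq_zero.mp hz).resolve_left (by simpa using hc)
  · rw [PencilImpulseFree, pencilPoly_fromBlocks_one_zero _ _ _ hA₂₂,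
      Polynomial.natDegree_C_mul hc, charpoly_natDegree_eq_dim, rank_fromBlocks_one_zero]

end SemiExplicit

end Matrix

theorem stmt_17_general {a b : ℕ}
    (L11 : Matrix (Fin a) (Fin a) ℝ) (L12 : Matrix (Fin a) (Fin b) ℝ)
    (L21 : Matrix (Fin b) (Fin a) ℝ) (L22 : Matrix (Fin b) (Fin b) ℝ)
    (hL22 : IsUnit L22)
    (X11 : Matrix (Fin a) (Fin a) ℝ) (hX11 : X11.PosDef)
    (hlyap : (-(X11 * (L11 - L12 * L22⁻¹ * L21)
        + (L11 - L12 * L22⁻¹ * L21)ᵀ * X11)).PosDef)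
    (X12 : Matrix (Fin a) (Fin b) ℝ) (hX12 : X12 = -(X11 * L12 * L22⁻¹))
    (X22 : Matrix (Fin b) (Fin b) ℝ)
    (hX22 : (X22 - X12ᵀ * X11⁻¹ * X12).PosDef)
    (Ehat Λ X : Matrix (Fin a ⊕ Fin b) (Fin a ⊕ Fin b) ℝ)
    (hE : Ehat = Matrix.fromBlocks 1 0 0 0)
    (hΛ : Λ = Matrix.fromBlocks L11 L12 L21 L22)
    (hX : X = Matrix.fromBlocks X11 X12 X12ᵀ X22) :
    X.PosDef ∧
    (∃ Y11 : Matrix (Fin a) (Fin a) ℝ, Y11.PosDef ∧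
      Ehat * X * Λ + Λᵀ * X * Ehat = -(Matrix.fromBlocks Y11 0 0 0)) ∧
    PencilAdmissible Ehat Λ := by
  subst hX12 hE hΛ hX
  let := hX11.isUnit.invertible
  have hX11symm : X11ᵀ = X11 := by
    rw [← conjTranspose_eq_transpose_of_trivial]; exact hX11.1
  refine ⟨?_, ⟨_, hlyap, ?_⟩,
    pencilAdmissible_fromBlocks_one_zero hL22 (isHurwitz_of_lyapunov hX11 hlyap)⟩
  · simp only [← conjTranspose_eq_transpose_of_trivial] at hX22 ⊢
    exact posDef_fromBlocks₁₁ _ X22 hX11 hX22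
  · simp only [fromBlocks_neg, neg_neg, neg_zero]
    exact fromBlocks_one_zero_lyapunov hX11symm X22 hL22

/-- Construction of a positive definite generalized Lyapunov solution for
the semi-explicit error pencil, and the resulting admissibility (concluding step of the
proof of Theorem 2). -/
theorem stmt_17 {a b : ℕ} (ha : 1 ≤ a) (hb : 1 ≤ b)
    (L11 : Matrix (Fin a) (Fin a) ℝ) (L12 : Matrix (Fin a) (Fin b) ℝ)
    (L21 : Matrix (Fin b) (Fin a) ℝ) (L22 : Matrix (Fin b) (Fin b) ℝ)
    (hL22 : IsUnit L22)
    (X11 : Matrix (Fin a) (Fin a) ℝ) (hX11 : X11.PosDef)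
    (hlyap : (-(X11 * (L11 - L12 * L22⁻¹ * L21)
        + (L11 - L12 * L22⁻¹ * L21)ᵀ * X11)).PosDef)
    (X12 : Matrix (Fin a) (Fin b) ℝ) (hX12 : X12 = -(X11 * L12 * L22⁻¹))
    (X22 : Matrix (Fin b) (Fin b) ℝ) (hX22symm : X22.IsSymm)
    (hX22 : (X22 - X12ᵀ * X11⁻¹ * X12).PosDef)
    (Ehat Λ X : Matrix (Fin a ⊕ Fin b) (Fin a ⊕ Fin b) ℝ)
    (hE : Ehat = Matrix.fromBlocks 1 0 0 0)
    (hΛ : Λ = Matrix.fromBlocks L11 L12 L21 L22)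
    (hX : X = Matrix.fromBlocks X11 X12 X12ᵀ X22) :
    X.PosDef ∧
    (∃ Y11 : Matrix (Fin a) (Fin a) ℝ, Y11.PosDef ∧
      Ehat * X * Λ + Λᵀ * X * Ehat = -(Matrix.fromBlocks Y11 0 0 0)) ∧
    PencilAdmissible Ehat Λ :=
  stmt_17_general L11 L12 L21 L22 hL22 X11 hX11 hlyap X12 hX12 X22 hX22 Ehat Λ X hE hΛ hX
end
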